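/- arXiv:2601.19599 — 2 statements merged into one kernel-verified Lean document; each statement's English description precedes it below -/
import Mathlib

section
/- Let φ : 𝔻 → 𝔻 be holomorphic and r ∈ ℕ. There exists a constant C > 0 (depending only on φ and r) such that for all arcs I ⊆ 𝕋 and all n ≥ 1, (1/|I|)·∫_{S(I)} |φ(z)|^n·(1−|φ(z)|)^r dm(z) ≤ C/n^{r+1}. -/
/-!
By Schwarz–Pick, `1 - ‖φ z‖ ≥ c (1 - ‖z‖)` with `c = (1 - ‖φ 0‖) / 4`. Split
`‖φ‖ⁿ = ‖φ‖^(n - ⌊n/2⌋) ‖φ‖^⌊n/2⌋`: the first factor times `(1 - ‖φ‖)ʳ` is at most `2ʳ r! / nʳ`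
(from `xʳ e⁻ˣ ≤ r!`), and the second is at most the radial function `(1 - c (1 - ‖z‖))^⌊n/2⌋`.
After a rotation the Carleson box lies in a sector of opening `|I|`, so in polar coordinates the
integral of that radial function is at most `|I| / (c (⌊n/2⌋ + 1))`.
-/

open Metric MeasureTheory

/-- The Carleson box `S(I)` of the arc `I ⊆ 𝕋` with midpoint `exp(iθ₀)` and arclength `ℓ`:
`S(I) = { z = r e^{iθ} ∈ 𝔻 : e^{iθ} ∈ I, 1−r ≤ |I| }`. -/
def carlesonBox (θ₀ ℓ : ℝ) : Set ℂ :=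
  {z : ℂ | z ∈ ball (0 : ℂ) 1 ∧ 1 - ‖z‖ ≤ ℓ ∧
    ∃ θ : ℝ, |θ - θ₀| ≤ ℓ / 2 ∧ z = (‖z‖ : ℂ) * Complex.exp (θ * Complex.I)}

open Set Real

open scoped ENNReal ComplexConjugate

namespace Complex

theorem norm_one_sub_conj_mul_sq_sub_norm_sub_sq (b w : ℂ) :
    ‖1 - conj b * w‖ ^ 2 - ‖w - b‖ ^ 2 = (1 - ‖b‖ ^ 2) * (1 - ‖w‖ ^ 2) := by
  simp only [Complex.sq_norm, normSq_apply, sub_re, sub_im, mul_re, mul_im, one_re, one_im, conj_re,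
    conj_im]
  ring

theorem one_sub_norm_le_norm_one_sub_conj_mul {b w : ℂ} (hw : ‖w‖ ≤ 1) :
    1 - ‖b‖ ≤ ‖1 - conj b * w‖ := by
  have : ‖conj b * w‖ ≤ ‖b‖ := by
    rw [norm_mul, norm_conj]; exact mul_le_of_le_one_right (norm_nonneg b) hw
  have := norm_sub_norm_le (1 : ℂ) (conj b * w)
  rw [norm_one] at this
  linarith

theorem mapsTo_ball_mobius {b : ℂ} (hb : ‖b‖ < 1) :
    MapsTo (fun w ↦ (w - b) / (1 - conj b * w)) (ball 0 1) (ball 0 1) := by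
  intro w hw
  rw [mem_ball_zero_iff] at hw ⊢
  have hD := one_sub_norm_le_norm_one_sub_conj_mul (b := b) hw.le
  have key := norm_one_sub_conj_mul_sq_sub_norm_sub_sq b w
  rw [norm_div, div_lt_one (by linarith)]
  have : 0 < (1 - ‖b‖ ^ 2) * (1 - ‖w‖ ^ 2) := by
    have := norm_nonneg b; have := norm_nonneg w
    apply mul_pos <;> nlinarith
  nlinarith [norm_nonneg (w - b)]

theorem differentiableOn_mobius {b : ℂ} (hb : ‖b‖ < 1) :
    DifferentiableOn ℂ (fun w ↦ (w - b) / (1 - conj b * w)) (ball 0 1) := by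
  refine (differentiableOn_id.sub_const b).div (by fun_prop) fun w hw ↦ ?_
  rw [← norm_pos_iff]
  have := one_sub_norm_le_norm_one_sub_conj_mul (b := b) (mem_ball_zero_iff.1 hw).le
  linarith

theorem norm_le_one_sub_mul_of_mapsTo_ball {f : ℂ → ℂ} (hd : DifferentiableOn ℂ f (ball 0 1))
    (hm : MapsTo f (ball 0 1) (ball 0 1)) {z : ℂ} (hz : z ∈ ball 0 1) :
    ‖f z‖ ≤ 1 - (1 - ‖f 0‖) / 4 * (1 - ‖z‖) := by
  set b := f 0
  set w := f z
  have hb : ‖b‖ < 1 := mem_ball_zero_iff.1 (hm (mem_ball_self one_pos))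
  have hw : ‖w‖ < 1 := mem_ball_zero_iff.1 (hm hz)
  have hs : ‖z‖ < 1 := mem_ball_zero_iff.1 hz
  have hD := one_sub_norm_le_norm_one_sub_conj_mul (b := b) hw.le
  have schwarz : ‖(w - b) / (1 - conj b * w)‖ ≤ ‖z‖ :=
    norm_le_norm_of_mapsTo_ball ((differentiableOn_mobius hb).comp hd hm)
      (((mapsTo_ball_mobius hb).comp hm).mono_right ball_subset_closedBall)
      (by simp [b]) hs
  rw [norm_div, div_le_iff₀ (by linarith)] at schwarz
  have key := norm_one_sub_conj_mul_sq_sub_norm_sub_sq b w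
  have h2 : (1 - ‖b‖) * (1 - ‖z‖ ^ 2) ≤ (1 + ‖b‖) * (1 - ‖w‖ ^ 2) := by
    refine le_of_mul_le_mul_left ?_ (by linarith : 0 < 1 - ‖b‖)
    have hN : ‖w - b‖ ^ 2 ≤ ‖z‖ ^ 2 * ‖1 - conj b * w‖ ^ 2 := by
      rw [← mul_pow]; exact pow_le_pow_left₀ (norm_nonneg _) schwarz 2
    have hD2 : (1 - ‖b‖) ^ 2 ≤ ‖1 - conj b * w‖ ^ 2 := pow_le_pow_left₀ (by linarith) hD 2
    have := mul_le_mul_of_nonneg_right hD2 (by nlinarith [norm_nonneg z] : 0 ≤ 1 - ‖z‖ ^ 2)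
    nlinarith
  have h3 : (1 - ‖b‖) * (1 - ‖z‖) ≤ (1 - ‖b‖) * (1 - ‖z‖ ^ 2) :=
    mul_le_mul_of_nonneg_left (by nlinarith [norm_nonneg z]) (by linarith)
  have h4 : (1 + ‖b‖) * (1 + ‖w‖) ≤ 4 := by nlinarith [norm_nonneg w, norm_nonneg b]
  nlinarith [mul_le_mul_of_nonneg_right h4 (by linarith : 0 ≤ 1 - ‖w‖)]

end Complex

theorem mul_one_sub_pow_mul_pow_le_factorial {t : ℝ} (h0 : 0 ≤ t) (h1 : t ≤ 1) (k r : ℕ) :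
    (k * (1 - t)) ^ r * t ^ k ≤ r.factorial := by
  have hx : 0 ≤ k * (1 - t) := mul_nonneg k.cast_nonneg (by linarith)
  have hpow : (k * (1 - t)) ^ r ≤ r.factorial * exp (k * (1 - t)) := by
    have := pow_div_factorial_le_exp _ hx r
    rwa [div_le_iff₀ (by positivity), mul_comm (exp _)] at this
  have hexp : t ^ k ≤ exp (-(k * (1 - t))) := by
    calc t ^ k ≤ exp (t - 1) ^ k := pow_le_pow_left₀ h0 (by linarith [add_one_le_exp (t - 1)]) k
      _ = exp (-(k * (1 - t))) := by rw [← exp_nat_mul]; ring_nf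
  calc (k * (1 - t)) ^ r * t ^ k ≤ r.factorial * exp (k * (1 - t)) * exp (-(k * (1 - t))) :=
        mul_le_mul hpow hexp (by positivity) (by positivity)
    _ = r.factorial := by rw [mul_assoc, ← exp_add, add_neg_cancel, exp_zero, mul_one]

theorem pow_mul_one_sub_pow_le {u v : ℝ} (hu : 0 ≤ u) (huv : u ≤ v) (hv : v ≤ 1) {n : ℕ}
    (hn : 1 ≤ n) (r : ℕ) :
    u ^ n * (1 - u) ^ r ≤ 2 ^ r * r.factorial / n ^ r * v ^ (n / 2) := by
  set k := n - n / 2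
  have hk : (n : ℝ) ≤ 2 * k := by
    have : n ≤ 2 * k := by omega
    exact_mod_cast this
  have hsplit : u ^ n * (1 - u) ^ r = u ^ k * (1 - u) ^ r * u ^ (n / 2) := by
    rw [mul_right_comm, ← pow_add, Nat.sub_add_cancel (Nat.div_le_self n 2)]
  have hfirst : u ^ k * (1 - u) ^ r ≤ 2 ^ r * r.factorial / n ^ r := by
    rw [le_div_iff₀ (by positivity)]
    calc u ^ k * (1 - u) ^ r * n ^ r ≤ u ^ k * (1 - u) ^ r * (2 * k) ^ r := by
          gcongr
          · exact mul_nonneg (pow_nonneg hu k) (pow_nonneg (by linarith) r)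
      _ = 2 ^ r * ((k * (1 - u)) ^ r * u ^ k) := by rw [mul_pow, mul_pow]; ring
      _ ≤ 2 ^ r * r.factorial := by
          gcongr; exact mul_one_sub_pow_mul_pow_le_factorial hu (huv.trans hv) k r
  rw [hsplit]
  exact mul_le_mul hfirst (pow_le_pow_left₀ hu huv _) (pow_nonneg hu _) (by positivity)

theorem integral_le_of_lintegral_ofReal_le {α : Type*} [MeasurableSpace α] {μ : Measure α}
    {f : α → ℝ} {b : ℝ} (hb : 0 ≤ b) (h : ∫⁻ a, ENNReal.ofReal (f a) ∂μ ≤ ENNReal.ofReal b) :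
    ∫ a, f a ∂μ ≤ b := by
  by_cases hf : Integrable f μ
  · calc ∫ a, f a ∂μ ≤ ∫ a, max (f a) 0 ∂μ := integral_mono hf hf.pos_part fun a ↦ le_max_left _ _
      _ = (∫⁻ a, ENNReal.ofReal (f a) ∂μ).toReal := by
          rw [integral_eq_lintegral_of_nonneg_ae (f := fun a ↦ max (f a) 0)
            (ae_of_all _ fun a ↦ le_max_right _ _)
            hf.pos_part.aestronglyMeasurable]
          simp_rw [ENNReal.ofReal_max, ENNReal.ofReal_zero, max_zero]
      _ ≤ b := ENNReal.toReal_le_of_le_ofReal hb h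
  · rw [integral_undef hf]; exact hb

theorem integral_one_sub_mul_one_sub_pow_le {c : ℝ} (hc0 : 0 < c) (hc1 : c ≤ 1) (m : ℕ) :
    ∫ ρ in (0 : ℝ)..1, (1 - c * (1 - ρ)) ^ m ≤ 1 / (c * (m + 1)) := by
  have hsub := intervalIntegral.integral_comp_mul_add (a := 0) (b := 1) (fun x : ℝ ↦ x ^ m)
    hc0.ne' (1 - c)
  simp only [mul_zero, mul_one, zero_add, add_sub_cancel, integral_pow, one_pow,
    smul_eq_mul] at hsub
  rw [show (fun ρ : ℝ ↦ (1 - c * (1 - ρ)) ^ m) = fun ρ ↦ (c * ρ + (1 - c)) ^ m by ext; ring_nf,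
    hsub]
  have : 0 ≤ (1 - c) ^ (m + 1) := pow_nonneg (by linarith) _
  rw [inv_mul_eq_div, div_div, mul_comm, div_le_div_iff_of_pos_right (by positivity)]
  linarith

theorem lintegral_Ioo_mul_one_sub_mul_one_sub_pow_le {c : ℝ} (hc0 : 0 < c) (hc1 : c ≤ 1)
    (m : ℕ) :
    ∫⁻ ρ in Ioo 0 1, ENNReal.ofReal ρ * ENNReal.ofReal ((1 - c * (1 - ρ)) ^ m) ≤
      ENNReal.ofReal (1 / (c * (m + 1))) := by
  have hnn : ∀ ρ ∈ Ioo (0 : ℝ) 1, 0 ≤ (1 - c * (1 - ρ)) ^ m := fun ρ hρ ↦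
    pow_nonneg (by nlinarith [hρ.1, hρ.2]) m
  calc ∫⁻ ρ in Ioo 0 1, ENNReal.ofReal ρ * ENNReal.ofReal ((1 - c * (1 - ρ)) ^ m)
      ≤ ∫⁻ ρ in Ioo 0 1, ENNReal.ofReal ((1 - c * (1 - ρ)) ^ m) := by
        refine setLIntegral_mono (by fun_prop) fun ρ hρ ↦ ?_
        exact mul_le_of_le_one_left zero_le (ENNReal.ofReal_le_one.2 hρ.2.le)
    _ = ENNReal.ofReal (∫ ρ in (0 : ℝ)..1, (1 - c * (1 - ρ)) ^ m) := by
        rw [intervalIntegral.integral_of_le zero_le_one, integral_Ioc_eq_integral_Ioo,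
          ofReal_integral_eq_lintegral_ofReal
            ((by fun_prop : Continuous fun ρ : ℝ ↦ (1 - c * (1 - ρ)) ^ m).integrableOn_Icc.mono_set
              Ioo_subset_Icc_self) (ae_restrict_of_forall_mem measurableSet_Ioo hnn)]
    _ ≤ ENNReal.ofReal (1 / (c * (m + 1))) :=
        ENNReal.ofReal_le_ofReal (integral_one_sub_mul_one_sub_pow_le hc0 hc1 m)

section Sector

open Complex

def diskSector (α : ℝ) : Set ℂ := {z | ‖z‖ < 1 ∧ |arg z| ≤ α}

theorem measurableSet_diskSector (α : ℝ) : MeasurableSet (diskSector α) :=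
  (measurableSet_lt measurable_norm measurable_const).inter
    (measurableSet_le measurable_arg.abs measurable_const)

theorem lintegral_diskSector_le {g : ℝ → ℝ≥0∞} (hg : Measurable g) (α : ℝ) :
    ∫⁻ z in diskSector α, g ‖z‖ ≤
      ENNReal.ofReal (2 * α) * ∫⁻ ρ in Ioo 0 1, ENNReal.ofReal ρ * g ρ := by
  set R := Ioo (0 : ℝ) 1 ×ˢ Icc (-α) α
  have hR : MeasurableSet R := measurableSet_Ioo.prod measurableSet_Icc
  have hmeas : Measurable fun p : ℝ × ℝ ↦ ENNReal.ofReal p.1 * g p.1 := by fun_prop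
  have hpoint : ∀ p ∈ polarCoord.target, ENNReal.ofReal p.1 •
      (diskSector α).indicator (fun z ↦ g ‖z‖) (Complex.polarCoord.symm p) ≤
      R.indicator (fun p ↦ ENNReal.ofReal p.1 * g p.1) p := by
    intro p hp
    by_cases hmem : Complex.polarCoord.symm p ∈ diskSector α
    · have hpolar : (‖Complex.polarCoord.symm p‖, arg (Complex.polarCoord.symm p)) = p := by
        rw [← Complex.polarCoord_apply]; exact Complex.polarCoord.right_inv hp
      have hnorm : ‖Complex.polarCoord.symm p‖ = p.1 := congrArg Prod.fst hpolar
      have harg : arg (Complex.polarCoord.symm p) = p.2 := congrArg Prod.snd hpolar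
      have hpR : p ∈ R := by
        obtain ⟨hlt, hle⟩ := hmem
        rw [hnorm] at hlt
        rw [harg] at hle
        exact ⟨⟨hp.1, hlt⟩, abs_le.1 hle⟩
      rw [indicator_of_mem hmem, indicator_of_mem hpR, hnorm, smul_eq_mul]
    · rw [indicator_of_notMem hmem, smul_zero]
      exact zero_le
  calc ∫⁻ z in diskSector α, g ‖z‖
      = ∫⁻ p in polarCoord.target, ENNReal.ofReal p.1 •
          (diskSector α).indicator (fun z ↦ g ‖z‖) (Complex.polarCoord.symm p) := by
        rw [← lintegral_indicator (measurableSet_diskSector α),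
          Complex.lintegral_comp_polarCoord_symm]
    _ ≤ ∫⁻ p in polarCoord.target, R.indicator (fun p ↦ ENNReal.ofReal p.1 * g p.1) p :=
        setLIntegral_mono (hmeas.indicator hR) hpoint
    _ ≤ ∫⁻ p in R, ENNReal.ofReal p.1 * g p.1 := by
        rw [← lintegral_indicator hR]; exact setLIntegral_le_lintegral _ _
    _ = (∫⁻ ρ in Ioo 0 1, ENNReal.ofReal ρ * g ρ) * volume (Icc (-α) α) := by
        rw [Measure.volume_eq_prod, ← Measure.prod_restrict, ← Measure.restrict_apply_univ,
          ← setLIntegral_one, ← lintegral_prod_mul (by fun_prop) aemeasurable_const]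
        simp only [mul_one, Measure.restrict_univ]
    _ = _ := by rw [Real.volume_Icc, mul_comm]; ring_nf

theorem abs_arg_ofReal_mul_exp_mul_I_le {ρ ψ : ℝ} (hρ : 0 ≤ ρ) (hψ : |ψ| ≤ π) :
    |arg (ρ * exp (ψ * I))| ≤ |ψ| := by
  rcases hρ.eq_or_lt with rfl | hρ
  · simp
  rw [arg_real_mul _ hρ, arg_exp_mul_I]
  rcases (abs_le.1 hψ).1.eq_or_lt with hψπ | hψπ
  · rw [← hψπ, toIocMod_apply_left, abs_neg, abs_of_pos pi_pos, abs_of_pos (by linarith [pi_pos])]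
    linarith
  · rw [(toIocMod_eq_self _).2 ⟨hψπ, by linarith [(abs_le.1 hψ).2]⟩]

theorem carlesonBox_subset_preimage_diskSector (θ₀ : ℝ) {ℓ : ℝ} (hℓ : ℓ ≤ 2 * π) :
    carlesonBox θ₀ ℓ ⊆ rotation (Circle.exp (-θ₀)) ⁻¹' diskSector (ℓ / 2) := by
  rintro z ⟨hz, -, θ, hθ, hzθ⟩
  have hrot : rotation (Circle.exp (-θ₀)) z = ‖z‖ * exp ((θ - θ₀ : ℝ) * I) := by
    conv_lhs => rw [hzθ]
    rw [rotation_apply, Circle.coe_exp, mul_left_comm, ← Complex.exp_add]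
    push_cast
    ring_nf
  refine ⟨?_, ?_⟩
  · simpa using hz
  · rw [hrot]
    exact (abs_arg_ofReal_mul_exp_mul_I_le (norm_nonneg z) (by linarith)).trans hθ

theorem lintegral_carlesonBox_le {g : ℝ → ℝ≥0∞} (hg : Measurable g) (θ₀ : ℝ) {ℓ : ℝ}
    (hℓ : ℓ ≤ 2 * π) :
    ∫⁻ z in carlesonBox θ₀ ℓ, g ‖z‖ ≤
      ENNReal.ofReal ℓ * ∫⁻ ρ in Ioo 0 1, ENNReal.ofReal ρ * g ρ := by
  set u := rotation (Circle.exp (-θ₀))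
  calc ∫⁻ z in carlesonBox θ₀ ℓ, g ‖z‖ ≤ ∫⁻ z in u ⁻¹' diskSector (ℓ / 2), g ‖u z‖ := by
        simp only [u, LinearIsometryEquiv.norm_map]
        exact lintegral_mono_set (carlesonBox_subset_preimage_diskSector θ₀ hℓ)
    _ = ∫⁻ z in diskSector (ℓ / 2), g ‖z‖ :=
        u.measurePreserving.setLIntegral_comp_preimage (measurableSet_diskSector _)
          (hg.comp measurable_norm)
    _ ≤ ENNReal.ofReal ℓ * ∫⁻ ρ in Ioo 0 1, ENNReal.ofReal ρ * g ρ := by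
        simpa [mul_div_cancel₀] using lintegral_diskSector_le hg (ℓ / 2)

end Sector

theorem lintegral_carlesonBox_one_sub_mul_one_sub_pow_le {c : ℝ} (hc0 : 0 < c) (hc1 : c ≤ 1)
    (m : ℕ) (θ₀ : ℝ) {ℓ : ℝ} (hℓ : ℓ ≤ 2 * π) :
    ∫⁻ z in carlesonBox θ₀ ℓ, ENNReal.ofReal ((1 - c * (1 - ‖z‖)) ^ m) ≤
      ENNReal.ofReal (ℓ / (c * (m + 1))) := by
  calc ∫⁻ z in carlesonBox θ₀ ℓ, ENNReal.ofReal ((1 - c * (1 - ‖z‖)) ^ m)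
      ≤ ENNReal.ofReal ℓ *
          ∫⁻ ρ in Ioo 0 1, ENNReal.ofReal ρ * ENNReal.ofReal ((1 - c * (1 - ρ)) ^ m) :=
        lintegral_carlesonBox_le (by fun_prop) θ₀ hℓ
    _ ≤ ENNReal.ofReal ℓ * ENNReal.ofReal (1 / (c * (m + 1))) :=
        mul_le_mul_right (lintegral_Ioo_mul_one_sub_mul_one_sub_pow_le hc0 hc1 m) _
    _ = ENNReal.ofReal (ℓ / (c * (m + 1))) := by
        rw [← ENNReal.ofReal_mul' (by positivity), mul_one_div]

theorem integral_carlesonBox_pow_mul_one_sub_pow_le {f : ℂ → ℂ} {c : ℝ} (hc0 : 0 < c)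
    (hc1 : c ≤ 1) (hf : ∀ z ∈ ball (0 : ℂ) 1, ‖f z‖ ≤ 1 - c * (1 - ‖z‖)) (θ₀ : ℝ) {ℓ : ℝ}
    (hℓ0 : 0 ≤ ℓ) (hℓ : ℓ ≤ 2 * π) {n : ℕ} (hn : 1 ≤ n) (r : ℕ) :
    ∫ z in carlesonBox θ₀ ℓ, ‖f z‖ ^ n * (1 - ‖f z‖) ^ r ≤
      2 ^ r * r.factorial / n ^ r * (ℓ / (c * ((n / 2 : ℕ) + 1))) := by
  set B : ℝ := 2 ^ r * r.factorial / n ^ r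
  refine integral_le_of_lintegral_ofReal_le (by positivity) ?_
  calc ∫⁻ z in carlesonBox θ₀ ℓ, ENNReal.ofReal (‖f z‖ ^ n * (1 - ‖f z‖) ^ r)
      ≤ ∫⁻ z in carlesonBox θ₀ ℓ, ENNReal.ofReal B *
          ENNReal.ofReal ((1 - c * (1 - ‖z‖)) ^ (n / 2)) := by
        refine setLIntegral_mono (by fun_prop) fun z hz ↦ ?_
        rw [← ENNReal.ofReal_mul (by positivity)]
        refine ENNReal.ofReal_le_ofReal (pow_mul_one_sub_pow_le (norm_nonneg _) (hf z hz.1) ?_ hn r)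
        nlinarith [mem_ball_zero_iff.1 hz.1]
    _ = ENNReal.ofReal B * ∫⁻ z in carlesonBox θ₀ ℓ,
          ENNReal.ofReal ((1 - c * (1 - ‖z‖)) ^ (n / 2)) := lintegral_const_mul _ (by fun_prop)
    _ ≤ ENNReal.ofReal B * ENNReal.ofReal (ℓ / (c * ((n / 2 : ℕ) + 1))) :=
        mul_le_mul_right (lintegral_carlesonBox_one_sub_mul_one_sub_pow_le hc0 hc1 _ θ₀ hℓ) _
    _ = ENNReal.ofReal (B * (ℓ / (c * ((n / 2 : ℕ) + 1)))) :=
        (ENNReal.ofReal_mul (by positivity)).symm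

/-- for `φ : 𝔻 → 𝔻` holomorphic and `r ∈ ℕ` there is `C > 0` (depending on `φ, r`)
such that for all arcs `I ⊆ 𝕋` and all `n ≥ 1`,
`(1/|I|)∫_{S(I)} |φ(z)|ⁿ (1−|φ(z)|)ʳ dm(z) ≤ C/n^{r+1}`, with `m = π⁻¹·(area measure)`. -/
theorem stmt4 (φ : ℂ → ℂ) (hd : DifferentiableOn ℂ φ (ball 0 1))
    (hm : Set.MapsTo φ (ball 0 1) (ball 0 1)) (r : ℕ) :
    ∃ C > 0, ∀ θ₀ ℓ : ℝ, 0 < ℓ → ℓ ≤ 2 * Real.pi → ∀ n : ℕ, 1 ≤ n →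
      (1 / ℓ) * ((Real.pi)⁻¹ *
          ∫ z in carlesonBox θ₀ ℓ,
            ‖φ z‖ ^ n * (1 - ‖φ z‖) ^ r ∂volume)
        ≤ C / n ^ (r + 1) := by
  set c := (1 - ‖φ 0‖) / 4
  have hφ0 : ‖φ 0‖ < 1 := mem_ball_zero_iff.1 (hm (mem_ball_self one_pos))
  have hc0 : 0 < c := by simp only [c]; linarith
  have hc1 : c ≤ 1 := by simp only [c]; linarith [norm_nonneg (φ 0)]
  refine ⟨2 ^ (r + 1) * r.factorial / (π * c), by positivity, fun θ₀ ℓ hℓ hℓπ n hn ↦ ?_⟩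
  have hhalf : (n : ℝ) / 2 ≤ (n / 2 : ℕ) + 1 := by
    have : (n : ℝ) ≤ 2 * (n / 2 : ℕ) + 1 := by exact_mod_cast (by omega : n ≤ 2 * (n / 2) + 1)
    linarith
  calc (1 / ℓ) * (π⁻¹ * ∫ z in carlesonBox θ₀ ℓ, ‖φ z‖ ^ n * (1 - ‖φ z‖) ^ r)
      ≤ (1 / ℓ) * (π⁻¹ * (2 ^ r * r.factorial / n ^ r * (ℓ / (c * ((n / 2 : ℕ) + 1))))) := by
        gcongr
        exact integral_carlesonBox_pow_mul_one_sub_pow_le hc0 hc1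
          (fun z hz ↦ Complex.norm_le_one_sub_mul_of_mapsTo_ball hd hm hz) θ₀ hℓ.le hℓπ hn r
    _ = 2 ^ r * r.factorial / (π * c * n ^ r * ((n / 2 : ℕ) + 1)) := by field_simp
    _ ≤ 2 ^ r * r.factorial / (π * c * n ^ r * (n / 2)) := by gcongr
    _ = 2 ^ (r + 1) * r.factorial / (π * c) / n ^ (r + 1) := by field_simp; ring
end

section
/- There exist constants c > 0 and C > 0 such that for every arc I ⊆ 𝕋 and every w ∈ 𝔻, ∫_{S(I)} (1−|z|)^{-1}·𝟙_{D(z)}(w) dm(z) ≤ C·(1−|w|)·𝟙_{S(cI)}(w), where D(z) is the disc centered at z of radius (1/2)(1−|z|), S(I) is the Carleson box of I, and cI is the arc with the same midpoint as I and length c|I|. -/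
open Metric MeasureTheory

/- If `w ∈ D(z)` then `1 - |z|` and `1 - |w|` are comparable and `z` lies in the disc of radius
`1 - |w|` about `w`; hence the integrand is dominated by `(3/2) (1 - |w|)⁻¹ 𝟙_{B(w, 1 - |w|)}(z)`,
whose integral is `(3/2) π (1 - |w|)`. For the support: `|w - z| < (1 - |z|)/2 ≤ |I|/2`, and by
Jordan's inequality the arguments of `w` and `z` then differ by `O(|I|)`, so `w ∈ S(8π I)`. -/

open Complex

lemma abs_le_pi_div_two_mul_norm_exp_mul_I_sub_one {x : ℝ} (hx : |x| ≤ Real.pi) :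
    |x| ≤ Real.pi / 2 * ‖exp (x * I) - 1‖ := by
  have hπ := Real.pi_pos
  have hhalf : |x / 2| = |x| / 2 := by rw [abs_div, abs_two]
  have hjordan : 2 / Real.pi * |x / 2| ≤ |Real.sin (x / 2)| := by
    rw [Real.abs_sin_eq_sin_abs_of_abs_le_pi (by linarith)]
    exact Real.mul_le_sin (abs_nonneg _) (by linarith)
  rw [mul_comm (x : ℂ), norm_exp_I_mul_ofReal_sub_one, norm_mul, Real.norm_two, Real.norm_eq_abs]
  rw [hhalf, div_mul_eq_mul_div, div_le_iff₀ hπ] at hjordan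
  nlinarith

lemma exists_polar_angle_near (w : ℂ) (θ₁ : ℝ) :
    ∃ θ : ℝ, w = ‖w‖ * exp (θ * I) ∧ |θ - θ₁| ≤ Real.pi ∧
      ‖w‖ * |θ - θ₁| ≤ Real.pi / 2 * ‖w - ‖w‖ * exp (θ₁ * I)‖ := by
  set u := w * exp ((-θ₁ : ℝ) * I)
  have hunit : exp ((-θ₁ : ℝ) * I) * exp (θ₁ * I) = 1 := by rw [← exp_add]; simp
  have hpolar : ‖w‖ * exp (u.arg * I) * exp (θ₁ * I) = w := by
    have h := norm_mul_exp_arg_mul_I u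
    rw [norm_mul, norm_exp_ofReal_mul_I, mul_one] at h
    rw [h, mul_assoc, hunit, mul_one]
  refine ⟨θ₁ + u.arg, ?_, by simpa using abs_arg_le_pi u, ?_⟩
  · conv_lhs => rw [← hpolar]
    push_cast; rw [add_mul, exp_add]; ring
  · have hdiff : w - ‖w‖ * exp (θ₁ * I) = ‖w‖ * exp (θ₁ * I) * (exp (u.arg * I) - 1) := by
      nth_rewrite 1 [← hpolar]; ring
    rw [hdiff, norm_mul, norm_mul, norm_exp_ofReal_mul_I, norm_real, Real.norm_eq_abs,
      abs_norm, add_sub_cancel_left, mul_one, mul_left_comm]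
    exact mul_le_mul_of_nonneg_left
      (abs_le_pi_div_two_mul_norm_exp_mul_I_sub_one (abs_arg_le_pi u)) (norm_nonneg w)

lemma norm_sub_norm_mul_exp_le {w z : ℂ} {θ : ℝ} (hz : z = ‖z‖ * exp (θ * I)) :
    ‖w - ‖w‖ * exp (θ * I)‖ ≤ 2 * ‖w - z‖ := by
  have hradial : ‖z - ‖w‖ * exp (θ * I)‖ ≤ ‖w - z‖ := by
    conv_lhs => rw [hz, ← sub_mul, norm_mul, norm_exp_ofReal_mul_I, mul_one,
      ← ofReal_sub, norm_real, Real.norm_eq_abs]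
    rw [norm_sub_rev]
    exact abs_norm_sub_norm_le z w
  calc ‖w - ‖w‖ * exp (θ * I)‖
      ≤ ‖w - z‖ + ‖z - ‖w‖ * exp (θ * I)‖ := norm_sub_le_norm_sub_add_norm_sub _ _ _
    _ ≤ 2 * ‖w - z‖ := by linarith

lemma one_sub_norm_lt_of_mem_ball_half {z w : ℂ} (hwz : w ∈ ball z ((1 - ‖z‖) / 2)) :
    1 - ‖w‖ < 3 / 2 * (1 - ‖z‖) := by
  rw [mem_ball, dist_eq_norm] at hwz
  linarith [norm_sub_norm_le z w, norm_sub_rev z w]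

lemma mem_ball_one_sub_norm_of_mem_ball_half {z w : ℂ} (hwz : w ∈ ball z ((1 - ‖z‖) / 2)) :
    z ∈ ball w (1 - ‖w‖) := by
  rw [mem_ball, dist_comm, dist_eq_norm]
  rw [mem_ball, dist_eq_norm] at hwz
  linarith [norm_sub_norm_le w z]

lemma mem_carlesonBox_of_mem_ball_half {θ₀ ℓ : ℝ} {z w : ℂ} (hz : z ∈ carlesonBox θ₀ ℓ)
    (hwz : w ∈ ball z ((1 - ‖z‖) / 2)) : w ∈ carlesonBox θ₀ (8 * Real.pi * ℓ) := by
  obtain ⟨-, hzℓ, θ₁, hθ₁, hz_polar⟩ := hz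
  have hπ := Real.pi_gt_three
  have hz0 : 0 < 1 - ‖z‖ := by linarith [pos_of_mem_ball hwz]
  have hwz' := one_sub_norm_lt_of_mem_ball_half hwz
  have hw1 := pos_of_mem_ball (mem_ball_one_sub_norm_of_mem_ball_half hwz)
  refine ⟨mem_ball_zero_iff.mpr (by linarith), by nlinarith, ?_⟩
  -- for `ℓ ≥ 1/4` the arc of length `8πℓ` is the whole circle
  rcases le_or_gt (1 / 4) ℓ with hlarge | hsmall
  · obtain ⟨θ, hw_polar, hθ, -⟩ := exists_polar_angle_near w θ₀
    exact ⟨θ, by nlinarith, hw_polar⟩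
  · obtain ⟨θ, hw_polar, -, hθ⟩ := exists_polar_angle_near w θ₁
    have hchord : ‖w - ‖w‖ * exp (θ₁ * I)‖ < ℓ := by
      have := norm_sub_norm_mul_exp_le (w := w) hz_polar
      rw [mem_ball, dist_eq_norm] at hwz
      linarith
    have hw58 : 5 / 8 < ‖w‖ := by linarith
    have hθθ₁ : |θ - θ₁| ≤ 4 * Real.pi / 5 * ℓ := by
      nlinarith [abs_nonneg (θ - θ₁)]
    refine ⟨θ, ?_, hw_polar⟩
    calc |θ - θ₀| ≤ |θ - θ₁| + |θ₁ - θ₀| := abs_sub_le _ _ _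
      _ ≤ 8 * Real.pi * ℓ / 2 := by nlinarith

lemma inv_one_sub_norm_mul_indicator_nonneg (z w : ℂ) :
    0 ≤ (1 - ‖z‖)⁻¹ * Set.indicator (ball z ((1 - ‖z‖) / 2)) (fun _ => (1 : ℝ)) w := by
  by_cases hwz : w ∈ ball z ((1 - ‖z‖) / 2)
  · have : 0 < 1 - ‖z‖ := by linarith [pos_of_mem_ball hwz]
    rw [Set.indicator_of_mem hwz, mul_one]
    positivity
  · rw [Set.indicator_of_notMem hwz, mul_zero]

lemma inv_one_sub_norm_mul_indicator_le (z w : ℂ) :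
    (1 - ‖z‖)⁻¹ * Set.indicator (ball z ((1 - ‖z‖) / 2)) (fun _ => (1 : ℝ)) w ≤
      3 / 2 * (1 - ‖w‖)⁻¹ * Set.indicator (ball w (1 - ‖w‖)) (fun _ => (1 : ℝ)) z := by
  by_cases hwz : w ∈ ball z ((1 - ‖z‖) / 2)
  · have hzw := mem_ball_one_sub_norm_of_mem_ball_half hwz
    have hw0 := pos_of_mem_ball hzw
    rw [Set.indicator_of_mem hwz, Set.indicator_of_mem hzw, mul_one, mul_one,
      show (3 / 2 : ℝ) * (1 - ‖w‖)⁻¹ = (2 / 3 * (1 - ‖w‖))⁻¹ by rw [mul_inv]; norm_num]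
    exact inv_anti₀ (by positivity) (by linarith [one_sub_norm_lt_of_mem_ball_half hwz])
  · rw [Set.indicator_of_notMem hwz, mul_zero]
    by_cases hzw : z ∈ ball w (1 - ‖w‖)
    · have := pos_of_mem_ball hzw
      rw [Set.indicator_of_mem hzw, mul_one]
      positivity
    · rw [Set.indicator_of_notMem hzw, mul_zero]

lemma setIntegral_inv_one_sub_norm_mul_indicator_le (S : Set ℂ) {w : ℂ} (hw : ‖w‖ < 1) :
    ∫ z in S, (1 - ‖z‖)⁻¹ * Set.indicator (ball z ((1 - ‖z‖) / 2)) (fun _ => (1 : ℝ)) w ≤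
      3 / 2 * Real.pi * (1 - ‖w‖) := by
  have hw0 : 0 < 1 - ‖w‖ := by linarith
  set g : ℂ → ℝ := fun z => 3 / 2 * (1 - ‖w‖)⁻¹ * Set.indicator (ball w (1 - ‖w‖)) (fun _ => 1) z
  have hg_nonneg : ∀ z, 0 ≤ g z := fun z =>
    mul_nonneg (by positivity) (Set.indicator_nonneg (fun _ _ => zero_le_one) z)
  have hg_int : Integrable g :=
    ((integrable_indicator_iff measurableSet_ball).mpr
      (integrableOn_const measure_ball_lt_top.ne)).const_mul _
  have hg_integral : ∫ z, g z = 3 / 2 * Real.pi * (1 - ‖w‖) := by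
    rw [integral_const_mul, ← Pi.one_def, integral_indicator_one measurableSet_ball,
      measureReal_def, volume_ball, ENNReal.toReal_mul, ENNReal.toReal_pow, ENNReal.toReal_ofReal hw0.le]
    field_simp
    norm_num [NNReal.coe_real_pi]
  calc _ ≤ ∫ z in S, g z :=
        integral_mono_of_nonneg (.of_forall fun z => inv_one_sub_norm_mul_indicator_nonneg z w)
          hg_int.restrict (.of_forall fun z => inv_one_sub_norm_mul_indicator_le z w)
    _ ≤ ∫ z, g z := setIntegral_le_integral hg_int (.of_forall hg_nonneg)
    _ = _ := hg_integral

lemma setIntegral_carlesonBox_eq_zero {θ₀ ℓ : ℝ} {w : ℂ}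
    (hw : w ∉ carlesonBox θ₀ (8 * Real.pi * ℓ)) :
    ∫ z in carlesonBox θ₀ ℓ,
      (1 - ‖z‖)⁻¹ * Set.indicator (ball z ((1 - ‖z‖) / 2)) (fun _ => (1 : ℝ)) w = 0 :=
  setIntegral_eq_zero_of_forall_eq_zero fun _ hz => by
    rw [Set.indicator_of_notMem fun hwz => hw (mem_carlesonBox_of_mem_ball_half hz hwz), mul_zero]

/-- there exist `c > 0`, `C > 0` such that for every arc `I ⊆ 𝕋` and every
`w ∈ 𝔻`, `∫_{S(I)} (1−|z|)⁻¹ 𝟙_{D(z)}(w) dm(z) ≤ C (1−|w|) 𝟙_{S(cI)}(w)`, where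
`D(z) = ball z ((1−|z|)/2)`, `m = π⁻¹·(area measure)`, and `cI` is the concentric arc of
length `c|I|`. -/
theorem stmt7 :
    ∃ c > (0 : ℝ), ∃ C > (0 : ℝ), ∀ θ₀ ℓ : ℝ, 0 < ℓ → ℓ ≤ 2 * Real.pi →
      ∀ w ∈ ball (0 : ℂ) 1,
        (Real.pi)⁻¹ *
            ∫ z in carlesonBox θ₀ ℓ,
              (1 - ‖z‖)⁻¹ *
                Set.indicator (ball z ((1 - ‖z‖) / 2)) (fun _ => (1 : ℝ)) w ∂volume
          ≤ C * (1 - ‖w‖) *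
              Set.indicator (carlesonBox θ₀ (c * ℓ)) (fun _ => (1 : ℝ)) w := by
  refine ⟨8 * Real.pi, by positivity, 3 / 2, by norm_num, fun θ₀ ℓ _ _ w hw => ?_⟩
  by_cases hmem : w ∈ carlesonBox θ₀ (8 * Real.pi * ℓ)
  · rw [Set.indicator_of_mem hmem, mul_one]
    calc _ ≤ Real.pi⁻¹ * (3 / 2 * Real.pi * (1 - ‖w‖)) :=
          mul_le_mul_of_nonneg_left (setIntegral_inv_one_sub_norm_mul_indicator_le _
            (mem_ball_zero_iff.mp hw)) (inv_nonneg.mpr Real.pi_pos.le)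
      _ = 3 / 2 * (1 - ‖w‖) := by field_simp
  · rw [setIntegral_carlesonBox_eq_zero hmem, Set.indicator_of_notMem hmem]
    simp
end
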